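/- Let N ≥ 2 be an integer not divisible by 3, let λ ∈ ℝ with |λ| < λ_c, and let α₀, α₁, α₂ be the three distinct real roots of ξ³ − ξ − λ. Let a₀ ≤ a₁ ≤ a₂ be nonnegative integers with a₀ + a₁ + a₂ = N and a₀α₀ + a₁α₁ + a₂α₂ = 0, and let x* ∈ ℝ^N be any point having exactly aⱼ coordinates equal to αⱼ for j = 0, 1, 2 (so x* ∈ S, and x* is a stationary point of V_0 restricted to S). Then: if 2a₁ > a₀ + a₂, the maximal dimension of a subspace of S on which the Hessian quadratic form of V_0 restricted to S at x* is negative definite equals a₀; if 2a₁ < a₀ + a₂, this maximal dimension equals a₂ − 1. In other words, x* is a stationary point of index a₀, respectively a₂ − 1, of the constrained potential. -/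

import Mathlib

/-!
At `x`, the Hessian is the diagonal form `Q v = ∑ cᵢ vᵢ²` with `cᵢ = 3 xᵢ² - 1`. When no `cᵢ`
vanishes, the vector `c⁻¹` is `Q`-orthogonal to the hyperplane `∑ vᵢ = 0` and `Q c⁻¹ = ∑ cᵢ⁻¹`,
so the index of `Q` on the hyperplane is the number of negative `cᵢ`, lowered by one exactly
when `∑ cᵢ⁻¹ < 0`.

At the stationary point, `cᵢ = p'(αⱼ) = (αⱼ - αₖ)(αⱼ - αₗ)` whenever `xᵢ = αⱼ`, where
`p = ξ³ - ξ - λ`, so `∑ cᵢ⁻¹ = ∑ aⱼ / p'(αⱼ)`. The numbers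
`Aⱼ = 3aⱼ - N` satisfy `∑ Aⱼ = ∑ Aⱼ αⱼ = 0`, so `Aⱼ = t (αₖ - αₗ)` (indices cyclic), whence
`t² p'(αⱼ) = -Aₖ Aₗ` and `A₀ A₁ A₂ ∑ aⱼ / p'(αⱼ) = -t² (A₀² + A₁² + A₂²) / 3 < 0`. Comparing
`2a₁` with `a₀ + a₂` fixes the signs of the `Aⱼ`, hence those of the `cᵢ` and of `∑ cᵢ⁻¹`.
-/

open Module

section ZeroSumHyperplane

variable {ι : Type*} [Fintype ι]

def negDefDimsOnZeroSum (c : ι → ℝ) : Set ℕ :=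
  {d | ∃ W : Submodule ℝ (ι → ℝ), (∀ v ∈ W, ∑ i, v i = 0) ∧ finrank ℝ W = d ∧
    ∀ v ∈ W, v ≠ 0 → ∑ i, c i * v i ^ 2 < 0}

def sumCoords : (ι → ℝ) →ₗ[ℝ] ℝ := ∑ i, LinearMap.proj i

@[simp] lemma sumCoords_apply (v : ι → ℝ) : sumCoords v = ∑ i, v i := by
  simp [sumCoords]

lemma finrank_set_fun_eq_ncard (s : Set ι) : finrank ℝ (s → ℝ) = s.ncard := by
  classical
  rw [finrank_fintype_fun_eq_card, ← Nat.card_eq_fintype_card, Nat.card_coe_set_eq]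

lemma finrank_le_ncard_neg_of_negDef (c : ι → ℝ) (W : Submodule ℝ (ι → ℝ))
    (hW : ∀ v ∈ W, v ≠ 0 → ∑ i, c i * v i ^ 2 < 0) :
    finrank ℝ W ≤ {i | c i < 0}.ncard := by
  let restrict := LinearMap.funLeft ℝ ℝ (Subtype.val : {i | c i < 0} → ι) ∘ₗ W.subtype
  have hinj : Function.Injective restrict := by
    rw [← LinearMap.ker_eq_bot, Submodule.eq_bot_iff]
    intro v hv
    by_contra hv0
    have hvanish (i) (hi : c i < 0) : (v : ι → ℝ) i = 0 := congrFun hv ⟨i, hi⟩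
    have hnonneg : 0 ≤ ∑ i, c i * (v : ι → ℝ) i ^ 2 := Finset.sum_nonneg fun i _ => by
      by_cases hi : c i < 0
      · simp [hvanish i hi]
      · exact mul_nonneg (not_lt.mp hi) (sq_nonneg _)
    exact (hW v v.2 (by simpa using hv0)).not_ge hnonneg
  exact (LinearMap.finrank_le_finrank_of_injective hinj).trans (finrank_set_fun_eq_ncard _).le

lemma exists_negDef_finrank_eq_ncard_neg (c : ι → ℝ) :
    ∃ V : Submodule ℝ (ι → ℝ), finrank ℝ V = {i | c i < 0}.ncard ∧
      ∀ v ∈ V, v ≠ 0 → ∑ i, c i * v i ^ 2 < 0 := by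
  set s := {i | c i < 0}
  let extendByZero := Function.ExtendByZero.linearMap ℝ (Subtype.val : s → ι)
  refine ⟨LinearMap.range extendByZero, ?_, ?_⟩
  · rw [LinearMap.finrank_range_of_inj
      (Function.extend_injective Subtype.val_injective (0 : ι → ℝ)), finrank_set_fun_eq_ncard]
  rintro _ ⟨f, rfl⟩ hf
  have hvanish (i) (hi : ¬ c i < 0) : extendByZero f i = 0 :=
    Function.extend_apply' _ _ _ (by rintro ⟨j, rfl⟩; exact hi j.2)
  obtain ⟨i₀, hi₀⟩ := Function.ne_iff.mp hf
  have hneg : c i₀ < 0 := by_contra fun h => hi₀ (hvanish i₀ h)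
  refine Finset.sum_neg' (fun i _ => ?_) ⟨i₀, Finset.mem_univ _, mul_neg_of_neg_of_pos hneg
    (by simpa using sq_pos_of_ne_zero hi₀)⟩
  by_cases hi : c i < 0
  · exact mul_nonpos_of_nonpos_of_nonneg hi.le (sq_nonneg _)
  · simp [hvanish i hi]

lemma sum_mul_add_smul_inv_sq {c : ι → ℝ} (hc : ∀ i, c i ≠ 0) (v : ι → ℝ) (r : ℝ) :
    ∑ i, c i * (v + r • c⁻¹) i ^ 2
      = ∑ i, c i * v i ^ 2 + 2 * r * ∑ i, v i + r ^ 2 * ∑ i, (c i)⁻¹ := by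
  simp only [Finset.mul_sum, ← Finset.sum_add_distrib]
  refine Finset.sum_congr rfl fun i _ => ?_
  simp only [Pi.add_apply, Pi.smul_apply, Pi.inv_apply, smul_eq_mul]
  field_simp [hc i]
  ring

lemma finrank_mem_negDefDimsOnZeroSum_of_sum_inv_pos {c : ι → ℝ} (hc : ∀ i, c i ≠ 0)
    (hS : 0 < ∑ i, (c i)⁻¹) (V : Submodule ℝ (ι → ℝ))
    (hV : ∀ v ∈ V, v ≠ 0 → ∑ i, c i * v i ^ 2 < 0) :
    finrank ℝ V ∈ negDefDimsOnZeroSum c := by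
  generalize hSdef : ∑ i, (c i)⁻¹ = S at hS
  let toZeroSum : (ι → ℝ) →ₗ[ℝ] (ι → ℝ) := LinearMap.id - (S⁻¹ • sumCoords).smulRight c⁻¹
  have htoZeroSum (v : ι → ℝ) : toZeroSum v = v + (-(S⁻¹ * ∑ i, v i)) • c⁻¹ := by
    simp [toZeroSum, sub_eq_add_neg]
  have hsum (v : ι → ℝ) : ∑ i, toZeroSum v i = 0 := by
    simp only [htoZeroSum, Pi.add_apply, Pi.smul_apply, Pi.inv_apply, smul_eq_mul,
      Finset.sum_add_distrib, ← Finset.mul_sum, hSdef]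
    field_simp
    ring
  -- projecting along `c⁻¹`, which is `Q`-orthogonal to the hyperplane, lowers `Q` by `(∑ v)² / S`
  have hneg (v : ι → ℝ) (hv : v ∈ V) (hv0 : v ≠ 0) : ∑ i, c i * toZeroSum v i ^ 2 < 0 := by
    have hQ : ∑ i, c i * toZeroSum v i ^ 2 = ∑ i, c i * v i ^ 2 - (∑ i, v i) ^ 2 / S := by
      rw [htoZeroSum, sum_mul_add_smul_inv_sq hc, hSdef]
      field_simp
      ring
    rw [hQ]
    linarith [hV v hv hv0, div_nonneg (sq_nonneg (∑ i, v i)) hS.le]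
  have hinj : Function.Injective (toZeroSum ∘ₗ V.subtype) := by
    rw [← LinearMap.ker_eq_bot, Submodule.eq_bot_iff]
    intro v hv
    by_contra hv0
    have := hneg v v.2 (by simpa using hv0)
    rw [show toZeroSum v = 0 from hv] at this
    simp at this
  refine ⟨LinearMap.range (toZeroSum ∘ₗ V.subtype), ?_, LinearMap.finrank_range_of_inj hinj, ?_⟩
  · rintro _ ⟨v, rfl⟩
    exact hsum v
  · rintro _ ⟨v, rfl⟩ hv0
    exact hneg v v.2 fun h => hv0 (by simp [h])

lemma exists_zeroSum_le_finrank_sub_one (V : Submodule ℝ (ι → ℝ)) :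
    ∃ W ≤ V, (∀ v ∈ W, ∑ i, v i = 0) ∧ finrank ℝ V - 1 ≤ finrank ℝ W := by
  let sumOnV := sumCoords ∘ₗ V.subtype
  refine ⟨(LinearMap.ker sumOnV).map V.subtype, Submodule.map_subtype_le _ _, ?_, ?_⟩
  · rintro _ ⟨v, hv, rfl⟩
    simpa [sumOnV] using hv
  · have hrank := LinearMap.finrank_range_add_finrank_ker sumOnV
    have hrange : finrank ℝ (LinearMap.range sumOnV) ≤ 1 :=
      (Submodule.finrank_le _).trans (finrank_self ℝ).le
    rw [Submodule.finrank_map_subtype_eq]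
    omega

lemma finrank_add_one_le_ncard_neg_of_sum_inv_neg {c : ι → ℝ} (hc : ∀ i, c i ≠ 0)
    (hS : ∑ i, (c i)⁻¹ < 0) (W : Submodule ℝ (ι → ℝ)) (hWsum : ∀ v ∈ W, ∑ i, v i = 0)
    (hW : ∀ v ∈ W, v ≠ 0 → ∑ i, c i * v i ^ 2 < 0) :
    finrank ℝ W + 1 ≤ {i | c i < 0}.ncard := by
  have hlt : W < W ⊔ ℝ ∙ c⁻¹ := by
    refine SetLike.lt_iff_le_and_exists.mpr ⟨le_sup_left, c⁻¹,
      Submodule.mem_sup_right (Submodule.mem_span_singleton_self _), fun h => ?_⟩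
    exact hS.ne (hWsum _ h)
  have hneg (v) (hv : v ∈ W ⊔ ℝ ∙ c⁻¹) (hv0 : v ≠ 0) : ∑ i, c i * v i ^ 2 < 0 := by
    obtain ⟨y, hy, _, hz, rfl⟩ := Submodule.mem_sup.mp hv
    obtain ⟨r, rfl⟩ := Submodule.mem_span_singleton.mp hz
    rw [sum_mul_add_smul_inv_sq hc, hWsum y hy]
    rcases eq_or_ne y 0 with rfl | hy0
    · have hr : r ≠ 0 := by rintro rfl; simp at hv0
      simpa using mul_neg_of_pos_of_neg (by positivity) hS
    · nlinarith [hW y hy hy0, sq_nonneg r]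
  calc finrank ℝ W + 1 ≤ finrank ℝ ↥(W ⊔ ℝ ∙ c⁻¹) := Submodule.finrank_lt_finrank_of_lt hlt
    _ ≤ {i | c i < 0}.ncard := finrank_le_ncard_neg_of_negDef c _ hneg

theorem isGreatest_negDefDimsOnZeroSum_of_sum_inv_pos {c : ι → ℝ} (hc : ∀ i, c i ≠ 0)
    (hS : 0 < ∑ i, (c i)⁻¹) :
    IsGreatest (negDefDimsOnZeroSum c) {i | c i < 0}.ncard := by
  obtain ⟨V, hVdim, hV⟩ := exists_negDef_finrank_eq_ncard_neg c
  refine ⟨hVdim ▸ finrank_mem_negDefDimsOnZeroSum_of_sum_inv_pos hc hS V hV, ?_⟩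
  rintro _ ⟨W, -, rfl, hW⟩
  exact finrank_le_ncard_neg_of_negDef c W hW

theorem isGreatest_negDefDimsOnZeroSum_of_sum_inv_neg {c : ι → ℝ} (hc : ∀ i, c i ≠ 0)
    (hS : ∑ i, (c i)⁻¹ < 0) :
    IsGreatest (negDefDimsOnZeroSum c) ({i | c i < 0}.ncard - 1) := by
  have hle (d) (hd : d ∈ negDefDimsOnZeroSum c) : d + 1 ≤ {i | c i < 0}.ncard := by
    obtain ⟨W, hWsum, rfl, hW⟩ := hd
    exact finrank_add_one_le_ncard_neg_of_sum_inv_neg hc hS W hWsum hW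
  obtain ⟨V, hVdim, hV⟩ := exists_negDef_finrank_eq_ncard_neg c
  obtain ⟨W, hWV, hWsum, hWdim⟩ := exists_zeroSum_le_finrank_sub_one V
  have hW : finrank ℝ W ∈ negDefDimsOnZeroSum c := ⟨W, hWsum, rfl, fun v hv => hV v (hWV hv)⟩
  have hWle := hle _ hW
  exact ⟨by convert hW using 1; omega, fun d hd => by have := hle d hd; omega⟩

end ZeroSumHyperplane

section CubicRoots

variable {lam α₀ α₁ α₂ : ℝ}

lemma sq_add_mul_add_sq_eq_one_of_cube_sub_eq (h01 : α₀ ≠ α₁) (hr0 : α₀ ^ 3 - α₀ = lam)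
    (hr1 : α₁ ^ 3 - α₁ = lam) : α₀ ^ 2 + α₀ * α₁ + α₁ ^ 2 = 1 :=
  mul_left_cancel₀ (sub_ne_zero.mpr h01) (by linear_combination hr0 - hr1)

lemma add_add_eq_zero_of_cube_sub_eq (h01 : α₀ ≠ α₁) (h02 : α₀ ≠ α₂) (h12 : α₁ ≠ α₂)
    (hr0 : α₀ ^ 3 - α₀ = lam) (hr1 : α₁ ^ 3 - α₁ = lam) (hr2 : α₂ ^ 3 - α₂ = lam) :
    α₀ + α₁ + α₂ = 0 :=
  mul_left_cancel₀ (sub_ne_zero.mpr h12) (by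
    linear_combination sq_add_mul_add_sq_eq_one_of_cube_sub_eq h01 hr0 hr1 -
      sq_add_mul_add_sq_eq_one_of_cube_sub_eq h02 hr0 hr2)

lemma three_mul_sq_sub_one_eq_of_cube_sub_eq (h01 : α₀ ≠ α₁) (h02 : α₀ ≠ α₂) (h12 : α₁ ≠ α₂)
    (hr0 : α₀ ^ 3 - α₀ = lam) (hr1 : α₁ ^ 3 - α₁ = lam) (hr2 : α₂ ^ 3 - α₂ = lam) :
    3 * α₀ ^ 2 - 1 = (α₀ - α₁) * (α₀ - α₂) := by
  linear_combination sq_add_mul_add_sq_eq_one_of_cube_sub_eq h01 hr0 hr1 +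
    (α₀ - α₁) * add_add_eq_zero_of_cube_sub_eq h01 h02 h12 hr0 hr1 hr2

/-- `(A₀, A₁, A₂)` is orthogonal to `(1, 1, 1)` and to `(α₀, α₁, α₂)`, hence a multiple of their
cross product. -/
lemma exists_eq_mul_sub_of_sum_eq_zero {A₀ A₁ A₂ : ℝ} (h01 : α₀ ≠ α₁)
    (hA : A₀ + A₁ + A₂ = 0) (hAα : A₀ * α₀ + A₁ * α₁ + A₂ * α₂ = 0) :
    ∃ t, A₀ = t * (α₁ - α₂) ∧ A₁ = t * (α₂ - α₀) ∧ A₂ = t * (α₀ - α₁) := by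
  have hd : α₀ - α₁ ≠ 0 := sub_ne_zero.mpr h01
  refine ⟨A₂ / (α₀ - α₁), ?_, ?_, ?_⟩ <;> field_simp
  · linear_combination hAα - α₁ * hA
  · linear_combination α₀ * hA - hAα

lemma exists_sq_mul_three_mul_sq_sub_one_eq {A₀ A₁ A₂ : ℝ} (h01 : α₀ ≠ α₁) (h02 : α₀ ≠ α₂)
    (h12 : α₁ ≠ α₂) (hr0 : α₀ ^ 3 - α₀ = lam) (hr1 : α₁ ^ 3 - α₁ = lam)
    (hr2 : α₂ ^ 3 - α₂ = lam) (hA : A₀ + A₁ + A₂ = 0)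
    (hAα : A₀ * α₀ + A₁ * α₁ + A₂ * α₂ = 0) :
    ∃ t, t ^ 2 * (3 * α₀ ^ 2 - 1) = -(A₁ * A₂) ∧ t ^ 2 * (3 * α₁ ^ 2 - 1) = -(A₀ * A₂) ∧
      t ^ 2 * (3 * α₂ ^ 2 - 1) = -(A₀ * A₁) := by
  obtain ⟨t, rfl, rfl, rfl⟩ := exists_eq_mul_sub_of_sum_eq_zero h01 hA hAα
  refine ⟨t, ?_, ?_, ?_⟩
  · rw [three_mul_sq_sub_one_eq_of_cube_sub_eq h01 h02 h12 hr0 hr1 hr2]; ring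
  · rw [three_mul_sq_sub_one_eq_of_cube_sub_eq h01.symm h12 h02 hr1 hr0 hr2]; ring
  · rw [three_mul_sq_sub_one_eq_of_cube_sub_eq h02.symm h12.symm h01 hr2 hr0 hr1]; ring

end CubicRoots

lemma mul_sum_mul_inv_eq_of_sq_mul_eq {K₀ K₁ K₂ A₀ A₁ A₂ a₀ a₁ a₂ t : ℝ}
    (hP : A₀ * A₁ * A₂ ≠ 0) (h0 : t ^ 2 * K₀ = -(A₁ * A₂)) (h1 : t ^ 2 * K₁ = -(A₀ * A₂))
    (h2 : t ^ 2 * K₂ = -(A₀ * A₁)) :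
    A₀ * A₁ * A₂ * (a₀ * K₀⁻¹ + a₁ * K₁⁻¹ + a₂ * K₂⁻¹)
      = -t ^ 2 * (a₀ * A₀ + a₁ * A₁ + a₂ * A₂) := by
  have hK₀ : K₀ ≠ 0 := by rintro rfl; apply hP; linear_combination A₀ * h0
  have hK₁ : K₁ ≠ 0 := by rintro rfl; apply hP; linear_combination A₁ * h1
  have hK₂ : K₂ ≠ 0 := by rintro rfl; apply hP; linear_combination A₂ * h2
  field_simp
  linear_combination a₀ * A₀ * K₁ * K₂ * h0 + a₁ * A₁ * K₀ * K₂ * h1 + a₂ * A₂ * K₀ * K₁ * h2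

section HessianSigns

variable {lam α₀ α₁ α₂ a₀ a₁ a₂ : ℝ}

lemma exists_sq_mul_eq_and_prod_mul_sum_neg {A₀ A₁ A₂ : ℝ} (h01 : α₀ ≠ α₁) (h02 : α₀ ≠ α₂)
    (h12 : α₁ ≠ α₂) (hr0 : α₀ ^ 3 - α₀ = lam) (hr1 : α₁ ^ 3 - α₁ = lam)
    (hr2 : α₂ ^ 3 - α₂ = lam) (hmean : a₀ * α₀ + a₁ * α₁ + a₂ * α₂ = 0)
    (hA₀ : A₀ = 3 * a₀ - (a₀ + a₁ + a₂)) (hA₁ : A₁ = 3 * a₁ - (a₀ + a₁ + a₂))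
    (hA₂ : A₂ = 3 * a₂ - (a₀ + a₁ + a₂)) (hP : A₀ * A₁ * A₂ ≠ 0) :
    ∃ t ≠ 0, t ^ 2 * (3 * α₀ ^ 2 - 1) = -(A₁ * A₂) ∧ t ^ 2 * (3 * α₁ ^ 2 - 1) = -(A₀ * A₂) ∧
      t ^ 2 * (3 * α₂ ^ 2 - 1) = -(A₀ * A₁) ∧
      A₀ * A₁ * A₂ * (a₀ * (3 * α₀ ^ 2 - 1)⁻¹ + a₁ * (3 * α₁ ^ 2 - 1)⁻¹
        + a₂ * (3 * α₂ ^ 2 - 1)⁻¹) < 0 := by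
  have hα := add_add_eq_zero_of_cube_sub_eq h01 h02 h12 hr0 hr1 hr2
  obtain ⟨t, h0, h1, h2⟩ := exists_sq_mul_three_mul_sq_sub_one_eq (A₀ := A₀) (A₁ := A₁)
    (A₂ := A₂) h01 h02 h12 hr0 hr1 hr2 (by rw [hA₀, hA₁, hA₂]; ring)
    (by rw [hA₀, hA₁, hA₂]; linear_combination 3 * hmean - (a₀ + a₁ + a₂) * hα)
  have ht : t ≠ 0 := by rintro rfl; apply hP; linear_combination A₀ * h0
  refine ⟨t, ht, h0, h1, h2, ?_⟩
  rw [mul_sum_mul_inv_eq_of_sq_mul_eq hP h0 h1 h2]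
  have hA₀ne : A₀ ≠ 0 := left_ne_zero_of_mul (left_ne_zero_of_mul hP)
  have hAA : a₀ * A₀ + a₁ * A₁ + a₂ * A₂ = (A₀ ^ 2 + A₁ ^ 2 + A₂ ^ 2) / 3 := by
    rw [hA₀, hA₁, hA₂]; ring
  rw [hAA]
  have : 0 < A₀ ^ 2 := by positivity
  have : 0 < t ^ 2 := by positivity
  nlinarith [sq_nonneg A₁, sq_nonneg A₂]

lemma hessian_signs_of_lt_two_mul (h01 : α₀ ≠ α₁) (h02 : α₀ ≠ α₂) (h12 : α₁ ≠ α₂)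
    (hr0 : α₀ ^ 3 - α₀ = lam) (hr1 : α₁ ^ 3 - α₁ = lam) (hr2 : α₂ ^ 3 - α₂ = lam)
    (ha12 : a₁ ≤ a₂) (hmean : a₀ * α₀ + a₁ * α₁ + a₂ * α₂ = 0) (hgt : a₀ + a₂ < 2 * a₁) :
    3 * α₀ ^ 2 - 1 < 0 ∧ 0 < 3 * α₁ ^ 2 - 1 ∧ 0 < 3 * α₂ ^ 2 - 1 ∧
      0 < a₀ * (3 * α₀ ^ 2 - 1)⁻¹ + a₁ * (3 * α₁ ^ 2 - 1)⁻¹ + a₂ * (3 * α₂ ^ 2 - 1)⁻¹ := by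
  have hA₀ : 3 * a₀ - (a₀ + a₁ + a₂) < 0 := by linarith
  have hA₁ : 0 < 3 * a₁ - (a₀ + a₁ + a₂) := by linarith
  have hA₂ : 0 < 3 * a₂ - (a₀ + a₁ + a₂) := by linarith
  have hP := mul_neg_of_neg_of_pos (mul_neg_of_neg_of_pos hA₀ hA₁) hA₂
  obtain ⟨t, ht, h0, h1, h2, hS⟩ :=
    exists_sq_mul_eq_and_prod_mul_sum_neg h01 h02 h12 hr0 hr1 hr2 hmean rfl rfl rfl hP.ne
  have ht2 : 0 < t ^ 2 := by positivity
  refine ⟨?_, ?_, ?_, pos_of_mul_neg_right hS hP.le⟩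
  · exact neg_of_mul_neg_right (h0 ▸ neg_neg_of_pos (mul_pos hA₁ hA₂)) ht2.le
  · exact pos_of_mul_pos_right (h1 ▸ neg_pos_of_neg (mul_neg_of_neg_of_pos hA₀ hA₂)) ht2.le
  · exact pos_of_mul_pos_right (h2 ▸ neg_pos_of_neg (mul_neg_of_neg_of_pos hA₀ hA₁)) ht2.le

lemma hessian_signs_of_two_mul_lt (h01 : α₀ ≠ α₁) (h02 : α₀ ≠ α₂) (h12 : α₁ ≠ α₂)
    (hr0 : α₀ ^ 3 - α₀ = lam) (hr1 : α₁ ^ 3 - α₁ = lam) (hr2 : α₂ ^ 3 - α₂ = lam)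
    (ha01 : a₀ ≤ a₁) (hmean : a₀ * α₀ + a₁ * α₁ + a₂ * α₂ = 0) (hlt : 2 * a₁ < a₀ + a₂) :
    0 < 3 * α₀ ^ 2 - 1 ∧ 0 < 3 * α₁ ^ 2 - 1 ∧ 3 * α₂ ^ 2 - 1 < 0 ∧
      a₀ * (3 * α₀ ^ 2 - 1)⁻¹ + a₁ * (3 * α₁ ^ 2 - 1)⁻¹ + a₂ * (3 * α₂ ^ 2 - 1)⁻¹ < 0 := by
  have hA₀ : 3 * a₀ - (a₀ + a₁ + a₂) < 0 := by linarith
  have hA₁ : 3 * a₁ - (a₀ + a₁ + a₂) < 0 := by linarith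
  have hA₂ : 0 < 3 * a₂ - (a₀ + a₁ + a₂) := by linarith
  have hP := mul_pos (mul_pos_of_neg_of_neg hA₀ hA₁) hA₂
  obtain ⟨t, ht, h0, h1, h2, hS⟩ :=
    exists_sq_mul_eq_and_prod_mul_sum_neg h01 h02 h12 hr0 hr1 hr2 hmean rfl rfl rfl hP.ne'
  have ht2 : 0 < t ^ 2 := by positivity
  refine ⟨?_, ?_, ?_, neg_of_mul_neg_right hS hP.le⟩
  · exact pos_of_mul_pos_right (h0 ▸ neg_pos_of_neg (mul_neg_of_neg_of_pos hA₁ hA₂)) ht2.le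
  · exact pos_of_mul_pos_right (h1 ▸ neg_pos_of_neg (mul_neg_of_neg_of_pos hA₀ hA₂)) ht2.le
  · exact neg_of_mul_neg_right (h2 ▸ neg_neg_of_pos (mul_pos_of_neg_of_neg hA₀ hA₁)) ht2.le

end HessianSigns

section ThreeValued

variable {ι : Type*} {x : ι → ℝ} {α₀ α₁ α₂ : ℝ}

lemma forall_eq_or_eq_or_eq_of_ncard_add [Fintype ι] (h01 : α₀ ≠ α₁) (h02 : α₀ ≠ α₂)
    (h12 : α₁ ≠ α₂) (hcard : {i | x i = α₀}.ncard + {i | x i = α₁}.ncard + {i | x i = α₂}.ncard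
      = Fintype.card ι) :
    ∀ i, x i = α₀ ∨ x i = α₁ ∨ x i = α₂ := by
  have hdisj (α β : ℝ) (h : α ≠ β) : Disjoint {i | x i = α} {i | x i = β} :=
    Set.disjoint_left.mpr fun _ hα hβ => h (hα.symm.trans hβ)
  have hunion : {i | x i = α₀} ∪ {i | x i = α₁} ∪ {i | x i = α₂} = Set.univ := by
    refine Set.eq_of_subset_of_ncard_le (Set.subset_univ _) ?_
    rw [Set.ncard_union_eq ((hdisj _ _ h02).union_left (hdisj _ _ h12)),
      Set.ncard_union_eq (hdisj _ _ h01), hcard, Set.ncard_univ, Nat.card_eq_fintype_card]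
  intro i
  simpa [or_assoc] using Set.eq_univ_iff_forall.mp hunion i

lemma sum_comp_eq_of_forall_eq_or_eq_or_eq [Fintype ι] (h01 : α₀ ≠ α₁) (h02 : α₀ ≠ α₂)
    (h12 : α₁ ≠ α₂) (hx : ∀ i, x i = α₀ ∨ x i = α₁ ∨ x i = α₂) (f : ℝ → ℝ) :
    ∑ i, f (x i) = {i | x i = α₀}.ncard * f α₀ + {i | x i = α₁}.ncard * f α₁
      + {i | x i = α₂}.ncard * f α₂ := by
  classical
  have hsplit (i) : f (x i) = (if x i = α₀ then 1 else 0) * f α₀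
      + (if x i = α₁ then 1 else 0) * f α₁ + (if x i = α₂ then 1 else 0) * f α₂ := by
    rcases hx i with h | h | h <;> simp [h, h01, h02, h12, h01.symm, h02.symm, h12.symm]
  simp only [hsplit, Finset.sum_add_distrib, ← Finset.sum_mul, Finset.sum_boole,
    ← Set.ncard_coe_finset, Finset.coe_filter_univ]

lemma comp_ne_zero_and_setOf_comp_neg_eq {g : ℝ → ℝ}
    (hx : ∀ i, x i = α₀ ∨ x i = α₁ ∨ x i = α₂) (h0 : g α₀ < 0) (h1 : 0 < g α₁) (h2 : 0 < g α₂) :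
    (∀ i, g (x i) ≠ 0) ∧ {i | g (x i) < 0} = {i | x i = α₀} := by
  refine ⟨fun i => ?_, Set.ext fun i => ?_⟩
  · rcases hx i with h | h | h <;> rw [h] <;> [exact h0.ne; exact h1.ne'; exact h2.ne']
  · show g (x i) < 0 ↔ x i = α₀
    rcases hx i with h | h | h <;> rw [h]
    · exact iff_of_true h0 rfl
    · exact iff_of_false h1.not_gt fun e => h1.not_gt (e ▸ h0)
    · exact iff_of_false h2.not_gt fun e => h2.not_gt (e ▸ h0)

end ThreeValued

theorem stmt_1 (N : ℕ)
    (lam : ℝ)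
    (α₀ α₁ α₂ : ℝ) (h01 : α₀ ≠ α₁) (h02 : α₀ ≠ α₂) (h12 : α₁ ≠ α₂)
    (hr0 : α₀ ^ 3 - α₀ = lam) (hr1 : α₁ ^ 3 - α₁ = lam) (hr2 : α₂ ^ 3 - α₂ = lam)
    (a₀ a₁ a₂ : ℕ) (ha01 : a₀ ≤ a₁) (ha12 : a₁ ≤ a₂) (hsum : a₀ + a₁ + a₂ = N)
    (hmean : (a₀ : ℝ) * α₀ + (a₁ : ℝ) * α₁ + (a₂ : ℝ) * α₂ = 0)
    (x : Fin N → ℝ)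
    (hc0 : {i | x i = α₀}.ncard = a₀) (hc1 : {i | x i = α₁}.ncard = a₁)
    (hc2 : {i | x i = α₂}.ncard = a₂) :
    (2 * a₁ > a₀ + a₂ →
      IsGreatest {d : ℕ | ∃ W : Submodule ℝ (Fin N → ℝ),
        (∀ v ∈ W, ∑ i, v i = 0) ∧ Module.finrank ℝ W = d ∧
        (∀ v ∈ W, v ≠ 0 → ∑ i, (3 * (x i) ^ 2 - 1) * (v i) ^ 2 < 0)} a₀) ∧
    (2 * a₁ < a₀ + a₂ →
      IsGreatest {d : ℕ | ∃ W : Submodule ℝ (Fin N → ℝ),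
        (∀ v ∈ W, ∑ i, v i = 0) ∧ Module.finrank ℝ W = d ∧
        (∀ v ∈ W, v ≠ 0 → ∑ i, (3 * (x i) ^ 2 - 1) * (v i) ^ 2 < 0)} (a₂ - 1)) := by
  have hx : ∀ i, x i = α₀ ∨ x i = α₁ ∨ x i = α₂ :=
    forall_eq_or_eq_or_eq_of_ncard_add h01 h02 h12 (by rw [hc0, hc1, hc2, hsum, Fintype.card_fin])
  have hS : ∑ i, (3 * x i ^ 2 - 1)⁻¹ = (a₀ : ℝ) * (3 * α₀ ^ 2 - 1)⁻¹
      + (a₁ : ℝ) * (3 * α₁ ^ 2 - 1)⁻¹ + (a₂ : ℝ) * (3 * α₂ ^ 2 - 1)⁻¹ := by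
    rw [sum_comp_eq_of_forall_eq_or_eq_or_eq h01 h02 h12 hx (fun ξ => (3 * ξ ^ 2 - 1)⁻¹),
      hc0, hc1, hc2]
  refine ⟨fun hgt => ?_, fun hlt => ?_⟩
  · obtain ⟨h0, h1, h2, hsum_pos⟩ := hessian_signs_of_lt_two_mul h01 h02 h12 hr0 hr1 hr2
      (by exact_mod_cast ha12) hmean (by exact_mod_cast hgt)
    obtain ⟨hne, hneg⟩ := comp_ne_zero_and_setOf_comp_neg_eq (g := fun ξ => 3 * ξ ^ 2 - 1)
      hx h0 h1 h2
    have := isGreatest_negDefDimsOnZeroSum_of_sum_inv_pos hne (hS ▸ hsum_pos)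
    rwa [hneg, hc0] at this
  · obtain ⟨h0, h1, h2, hsum_neg⟩ := hessian_signs_of_two_mul_lt h01 h02 h12 hr0 hr1 hr2
      (by exact_mod_cast ha01) hmean (by exact_mod_cast hlt)
    obtain ⟨hne, hneg⟩ := comp_ne_zero_and_setOf_comp_neg_eq (g := fun ξ => 3 * ξ ^ 2 - 1)
      (x := x) (fun i => by have := hx i; tauto) h2 h0 h1
    have := isGreatest_negDefDimsOnZeroSum_of_sum_inv_neg hne (hS ▸ hsum_neg)
    rwa [hneg, hc2] at this
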